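/- Let (A⊗V,μ_{A⊗V}) be a weak crossed product with preunit ν:K→A⊗V. Then ψ=μ_{A⊗V}∘(η_A⊗V⊗β_ν), σ=μ_{A⊗V}∘(η_A⊗V⊗η_A⊗V), and ∇_{A⊗V}∘ν=ν, where β_ν=(μ_A⊗V)∘(A⊗ν). -/

import Mathlib

open CategoryTheory MonoidalCategory

universe v u

namespace WeakCrossed

variable {C : Type u} [Category.{v} C] [MonoidalCategory C]

/-- The monoid axioms for a triple `(A, η, μ)` in a monoidal category. -/
def IsMon (A : C) (eta : 𝟙_ C ⟶ A) (mu : A ⊗ A ⟶ A) : Prop :=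
  (eta ▷ A) ≫ mu = (λ_ A).hom ∧ (A ◁ eta) ≫ mu = (ρ_ A).hom ∧
    (mu ▷ A) ≫ mu = (α_ A A A).hom ≫ (A ◁ mu) ≫ mu

/-- The morphism `(μ_A ⊗ Y) ∘ (A ⊗ f) : (A ⊗ X) ⊗ Z ⟶ A ⊗ Y` for `f : X ⊗ Z ⟶ A ⊗ Y`. -/
def phi (A : C) {X Z Y : C} (mu : A ⊗ A ⟶ A) (f : X ⊗ Z ⟶ A ⊗ Y) :
    (A ⊗ X) ⊗ Z ⟶ A ⊗ Y :=
  (α_ A X Z).hom ≫ (A ◁ f) ≫ (α_ A A Y).inv ≫ (mu ▷ Y)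

/-- The measuring condition `(μ_A ⊗ V) ∘ (A ⊗ ψ) ∘ (ψ ⊗ A) = ψ ∘ (V ⊗ μ_A)`. -/
def Measuring (A V : C) (mu : A ⊗ A ⟶ A) (psi : V ⊗ A ⟶ A ⊗ V) : Prop :=
  (psi ▷ A) ≫ phi A mu psi = (α_ V A A).hom ≫ (V ◁ mu) ≫ psi

/-- The idempotent `∇_{A⊗V} = (μ_A ⊗ V) ∘ (A ⊗ ψ) ∘ (A ⊗ V ⊗ η_A)`. -/
def nabla (A V : C) (eta : 𝟙_ C ⟶ A) (mu : A ⊗ A ⟶ A) (psi : V ⊗ A ⟶ A ⊗ V) :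
    A ⊗ V ⟶ A ⊗ V :=
  (ρ_ (A ⊗ V)).inv ≫ ((A ⊗ V) ◁ eta) ≫ phi A mu psi

/-- The twisted condition
`(μ_A ⊗ V) ∘ (A ⊗ ψ) ∘ (σ ⊗ A) = (μ_A ⊗ V) ∘ (A ⊗ σ) ∘ (ψ ⊗ V) ∘ (V ⊗ ψ)`. -/
def Twisted (A V : C) (mu : A ⊗ A ⟶ A) (psi : V ⊗ A ⟶ A ⊗ V)
    (sig : V ⊗ V ⟶ A ⊗ V) : Prop :=
  (sig ▷ A) ≫ phi A mu psi =
    (α_ V V A).hom ≫ (V ◁ psi) ≫ (α_ V A V).inv ≫ (psi ▷ V) ≫ phi A mu sig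

/-- The cocycle condition
`(μ_A ⊗ V) ∘ (A ⊗ σ) ∘ (σ ⊗ V) = (μ_A ⊗ V) ∘ (A ⊗ σ) ∘ (ψ ⊗ V) ∘ (V ⊗ σ)`. -/
def Cocycle (A V : C) (mu : A ⊗ A ⟶ A) (psi : V ⊗ A ⟶ A ⊗ V)
    (sig : V ⊗ V ⟶ A ⊗ V) : Prop :=
  (sig ▷ V) ≫ phi A mu sig =
    (α_ V V V).hom ≫ (V ◁ sig) ≫ (α_ V A V).inv ≫ (psi ▷ V) ≫ phi A mu sig

/-- The weak crossed product multiplication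
`μ_{A⊗V} = (μ_A ⊗ V) ∘ (μ_A ⊗ σ) ∘ (A ⊗ ψ ⊗ V)`. -/
def prodAV (A V : C) (mu : A ⊗ A ⟶ A) (psi : V ⊗ A ⟶ A ⊗ V)
    (sig : V ⊗ V ⟶ A ⊗ V) : (A ⊗ V) ⊗ (A ⊗ V) ⟶ A ⊗ V :=
  (α_ A V (A ⊗ V)).hom ≫ (A ◁ ((α_ V A V).inv ≫ (psi ▷ V) ≫ (α_ A V V).hom)) ≫
    (α_ A A (V ⊗ V)).inv ≫ (mu ⊗ₘ sig) ≫ (α_ A A V).inv ≫ (mu ▷ V)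

/-- The morphism `η_A ⊗ V : V ⟶ A ⊗ V`. -/
def etaT (A V : C) (eta : 𝟙_ C ⟶ A) : V ⟶ A ⊗ V := (λ_ V).inv ≫ (eta ▷ V)

/-- The morphism `β_ν = (μ_A ⊗ V) ∘ (A ⊗ ν) : A ⟶ A ⊗ V`. -/
def beta (A V : C) (mu : A ⊗ A ⟶ A) (nu : 𝟙_ C ⟶ A ⊗ V) : A ⟶ A ⊗ V :=
  (ρ_ A).inv ≫ (A ◁ nu) ≫ (α_ A A V).inv ≫ (mu ▷ V)

/-- Preunit condition (pre1):
`(μ_A ⊗ V) ∘ (A ⊗ σ) ∘ (ψ ⊗ V) ∘ (V ⊗ ν) = ∇_{A⊗V} ∘ (η_A ⊗ V)`. -/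
def Pre1 (A V : C) (eta : 𝟙_ C ⟶ A) (mu : A ⊗ A ⟶ A) (psi : V ⊗ A ⟶ A ⊗ V)
    (sig : V ⊗ V ⟶ A ⊗ V) (nu : 𝟙_ C ⟶ A ⊗ V) : Prop :=
  (ρ_ V).inv ≫ (V ◁ nu) ≫ (α_ V A V).inv ≫ (psi ▷ V) ≫ phi A mu sig =
    etaT A V eta ≫ nabla A V eta mu psi

/-- Preunit condition (pre2):
`(μ_A ⊗ V) ∘ (A ⊗ σ) ∘ (ν ⊗ V) = ∇_{A⊗V} ∘ (η_A ⊗ V)`. -/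
def Pre2 (A V : C) (eta : 𝟙_ C ⟶ A) (mu : A ⊗ A ⟶ A) (psi : V ⊗ A ⟶ A ⊗ V)
    (sig : V ⊗ V ⟶ A ⊗ V) (nu : 𝟙_ C ⟶ A ⊗ V) : Prop :=
  (λ_ V).inv ≫ (nu ▷ V) ≫ phi A mu sig = etaT A V eta ≫ nabla A V eta mu psi

/-- Preunit condition (pre3): `(μ_A ⊗ V) ∘ (A ⊗ ψ) ∘ (ν ⊗ A) = β_ν`. -/
def Pre3 (A V : C) (mu : A ⊗ A ⟶ A) (psi : V ⊗ A ⟶ A ⊗ V)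
    (nu : 𝟙_ C ⟶ A ⊗ V) : Prop :=
  (λ_ A).inv ≫ (nu ▷ A) ≫ phi A mu psi = beta A V mu nu

/-- `(A ⊗ V, μ_{A⊗V})` is a weak crossed product: measuring, twisted and cocycle
conditions hold and `∇_{A⊗V} ∘ σ = σ`. -/
def WCP (A V : C) (eta : 𝟙_ C ⟶ A) (mu : A ⊗ A ⟶ A) (psi : V ⊗ A ⟶ A ⊗ V)
    (sig : V ⊗ V ⟶ A ⊗ V) : Prop :=
  Measuring A V mu psi ∧ Twisted A V mu psi sig ∧ Cocycle A V mu psi sig ∧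
    sig ≫ nabla A V eta mu psi = sig

/-- `(A ⊗ V, μ_{A⊗V})` is a weak crossed product with preunit `ν`. -/
def WCPpre (A V : C) (eta : 𝟙_ C ⟶ A) (mu : A ⊗ A ⟶ A) (psi : V ⊗ A ⟶ A ⊗ V)
    (sig : V ⊗ V ⟶ A ⊗ V) (nu : 𝟙_ C ⟶ A ⊗ V) : Prop :=
  WCP A V eta mu psi sig ∧ Pre1 A V eta mu psi sig nu ∧
    Pre2 A V eta mu psi sig nu ∧ Pre3 A V mu psi nu

/-- `(μ_A ⊗ Y) ∘ (A ⊗ γ) : A ⊗ X ⟶ A ⊗ Y` for `γ : X ⟶ A ⊗ Y`. -/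
def tmap (A : C) {X Y : C} (mu : A ⊗ A ⟶ A) (g : X ⟶ A ⊗ Y) : A ⊗ X ⟶ A ⊗ Y :=
  (A ◁ g) ≫ (α_ A A Y).inv ≫ (mu ▷ Y)

/-- Left `A`-linearity of `T : A ⊗ X ⟶ A ⊗ Y`:
`T ∘ (μ_A ⊗ X) = (μ_A ⊗ Y) ∘ (A ⊗ T)`. -/
def LeftLin (A : C) {X Y : C} (mu : A ⊗ A ⟶ A) (T : A ⊗ X ⟶ A ⊗ Y) : Prop :=
  (mu ▷ X) ≫ T = (α_ A A X).hom ≫ (A ◁ T) ≫ (α_ A A Y).inv ≫ (mu ▷ Y)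

/-- `ν` is a preunit for the associative product `m` on `X`. -/
def IsPreunit {X : C} (m : X ⊗ X ⟶ X) (nu : 𝟙_ C ⟶ X) : Prop :=
  (ρ_ X).inv ≫ (X ◁ nu) ≫ m = (λ_ X).inv ≫ (nu ▷ X) ≫ m ∧
  (ρ_ X).inv ≫ (X ◁ nu) ≫ m =
    (ρ_ X).inv ≫ (X ◁ ((λ_ (𝟙_ C)).inv ≫ (nu ⊗ₘ nu) ≫ m)) ≫ m

/-- Brzeziński normalization conditions: `ψ ∘ (η_V ⊗ A) = A ⊗ η_V`,
`ψ ∘ (V ⊗ η_A) = η_A ⊗ V`, `σ ∘ (η_V ⊗ V) = σ ∘ (V ⊗ η_V) = η_A ⊗ V`. -/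
def BrzNorm (A V : C) (eta : 𝟙_ C ⟶ A) (etaV : 𝟙_ C ⟶ V) (psi : V ⊗ A ⟶ A ⊗ V)
    (sig : V ⊗ V ⟶ A ⊗ V) : Prop :=
  (λ_ A).inv ≫ (etaV ▷ A) ≫ psi = (ρ_ A).inv ≫ (A ◁ etaV) ∧
  (ρ_ V).inv ≫ (V ◁ eta) ≫ psi = (λ_ V).inv ≫ (eta ▷ V) ∧
  (λ_ V).inv ≫ (etaV ▷ V) ≫ sig = (λ_ V).inv ≫ (eta ▷ V) ∧
  (ρ_ V).inv ≫ (V ◁ etaV) ≫ sig = (λ_ V).inv ≫ (eta ▷ V)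

/-! The maps `tmap g = (μ_A ⊗ Y) ∘ (A ⊗ g)` compose like Kleisli extensions for the monad
`A ⊗ -`: `tmap g ∘ (η_A ⊗ X) = g` and `tmap q ∘ (tmap p ⊗ Z) = tmap (tmap q ∘ (p ⊗ Z))`
(up to associators). In these terms `μ_{A⊗V} = tmap (tmap σ ∘ (ψ ⊗ V))`,
`∇_{A⊗V} = tmap (ψ ∘ (V ⊗ η_A))` and `β_ν = tmap ν`, so `η_A ⊗ V` in the first slot of
`μ_{A⊗V}` leaves `tmap σ ∘ (ψ ⊗ V)`. With `β_ν` in the second slot, the measuring condition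
moves `β_ν` through `ψ`, and (pre1) turns the result into `∇_{A⊗V} ∘ ψ = ψ`. With `η_A ⊗ V`
in the second slot, (pre2) and the cocycle condition rewrite the product as
`μ_{A⊗V} ∘ (ν ⊗ σ)`; by (pre2) and (pre3) left multiplication by `ν` is `∇_{A⊗V}`, which
fixes `σ`. Finally `∇_{A⊗V} ∘ ν = β_ν ∘ η_A = ν` by (pre3) and the unit law. -/

section Kleisli

variable {A : C} {eta : 𝟙_ C ⟶ A} {mu : A ⊗ A ⟶ A}

lemma whiskerLeft_tmap {X X' Y : C} (w : X' ⟶ X) (g : X ⟶ A ⊗ Y) :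
    (A ◁ w) ≫ tmap A mu g = tmap A mu (w ≫ g) := by
  simp [tmap]

lemma phi_eq_tmap {X Z Y : C} (f : X ⊗ Z ⟶ A ⊗ Y) :
    phi A mu f = (α_ A X Z).hom ≫ tmap A mu f := rfl

lemma etaT_tmap (hl : (eta ▷ A) ≫ mu = (λ_ A).hom) {X Y : C} (g : X ⟶ A ⊗ Y) :
    etaT A X eta ≫ tmap A mu g = g := by
  calc etaT A X eta ≫ tmap A mu g
      = g ≫ (λ_ (A ⊗ Y)).inv ≫ (α_ (𝟙_ C) A Y).inv ≫ (((eta ▷ A) ≫ mu) ▷ Y) := by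
        simp only [tmap, etaT, comp_whiskerRight, Category.assoc]
        rw [← whisker_exchange_assoc]
        monoidal
    _ = g := by rw [hl]; monoidal

lemma whiskerRight_etaT_phi (hl : (eta ▷ A) ≫ mu = (λ_ A).hom) {X Z Y : C}
    (f : X ⊗ Z ⟶ A ⊗ Y) : (etaT A X eta ▷ Z) ≫ phi A mu f = f := by
  have : (etaT A X eta ▷ Z) ≫ (α_ A X Z).hom = etaT A (X ⊗ Z) eta := by
    simp only [etaT, comp_whiskerRight, Category.assoc]
    monoidal
  rw [phi_eq_tmap, reassoc_of% this, etaT_tmap hl]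

lemma leftLin_tmap (hassoc : (mu ▷ A) ≫ mu = (α_ A A A).hom ≫ (A ◁ mu) ≫ mu) {X Y : C}
    (g : X ⟶ A ⊗ Y) : LeftLin A mu (tmap A mu g) := by
  calc (mu ▷ X) ≫ tmap A mu g
      = ((A ⊗ A) ◁ g) ≫ (α_ (A ⊗ A) A Y).inv ≫ (((mu ▷ A) ≫ mu) ▷ Y) := by
        simp only [tmap, comp_whiskerRight]
        rw [← whisker_exchange_assoc]
        monoidal
    _ = (α_ A A X).hom ≫ (A ◁ tmap A mu g) ≫ (α_ A A Y).inv ≫ (mu ▷ Y) := by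
        rw [hassoc]
        simp only [tmap, comp_whiskerRight, MonoidalCategory.whiskerLeft_comp, Category.assoc]
        monoidal

lemma whiskerRight_tmap_phi (hassoc : (mu ▷ A) ≫ mu = (α_ A A A).hom ≫ (A ◁ mu) ≫ mu)
    {W Y Z U : C} (p : W ⟶ A ⊗ Y) (q : Y ⊗ Z ⟶ A ⊗ U) :
    (tmap A mu p ▷ Z) ≫ phi A mu q = phi A mu ((p ▷ Z) ≫ phi A mu q) := by
  calc (tmap A mu p ▷ Z) ≫ phi A mu q
      = ((A ◁ p) ▷ Z) ≫ ((α_ A A Y).inv ▷ Z) ≫ (α_ (A ⊗ A) Y Z).hom ≫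
          (mu ▷ (Y ⊗ Z)) ≫ tmap A mu q := by
        simp only [tmap, phi_eq_tmap, comp_whiskerRight, Category.assoc]
        monoidal
    _ = phi A mu ((p ▷ Z) ≫ phi A mu q) := by
        rw [leftLin_tmap hassoc q]
        simp only [tmap, phi_eq_tmap, MonoidalCategory.whiskerLeft_comp, Category.assoc]
        monoidal

lemma whiskerRight_phi_phi (hassoc : (mu ▷ A) ≫ mu = (α_ A A A).hom ≫ (A ◁ mu) ≫ mu)
    {X W Y Z U : C} (p : X ⊗ W ⟶ A ⊗ Y) (q : Y ⊗ Z ⟶ A ⊗ U) :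
    (phi A mu p ▷ Z) ≫ phi A mu q =
      ((α_ A X W).hom ▷ Z) ≫ phi A mu ((p ▷ Z) ≫ phi A mu q) := by
  rw [phi_eq_tmap p, comp_whiskerRight, Category.assoc, whiskerRight_tmap_phi hassoc]

end Kleisli

section Recovery

variable {A V : C} {eta : 𝟙_ C ⟶ A} {mu : A ⊗ A ⟶ A} {psi : V ⊗ A ⟶ A ⊗ V}
  {sig : V ⊗ V ⟶ A ⊗ V} {nu : 𝟙_ C ⟶ A ⊗ V}

lemma nabla_eq_tmap : nabla A V eta mu psi = tmap A mu ((ρ_ V).inv ≫ (V ◁ eta) ≫ psi) := by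
  simp only [nabla, phi, tmap, MonoidalCategory.whiskerLeft_comp, Category.assoc]
  monoidal

lemma beta_eq_tmap : beta A V mu nu = (ρ_ A).inv ≫ tmap A mu nu := rfl

lemma prodAV_eq_phi (hassoc : (mu ▷ A) ≫ mu = (α_ A A A).hom ≫ (A ◁ mu) ≫ mu) :
    prodAV A V mu psi sig = phi A mu ((α_ V A V).inv ≫ (psi ▷ V) ≫ phi A mu sig) := by
  calc prodAV A V mu psi sig
      = (α_ A V (A ⊗ V)).hom ≫ (A ◁ ((α_ V A V).inv ≫ (psi ▷ V) ≫ (α_ A V V).hom)) ≫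
          (α_ A A (V ⊗ V)).inv ≫ (mu ▷ (V ⊗ V)) ≫ tmap A mu sig := by
        simp only [prodAV, tmap, MonoidalCategory.tensorHom_def,
          MonoidalCategory.whiskerLeft_comp, Category.assoc]
    _ = phi A mu ((α_ V A V).inv ≫ (psi ▷ V) ≫ phi A mu sig) := by
        rw [leftLin_tmap hassoc sig]
        simp only [tmap, phi_eq_tmap, MonoidalCategory.whiskerLeft_comp, Category.assoc]
        monoidal

lemma etaT_nabla (hl : (eta ▷ A) ≫ mu = (λ_ A).hom) :
    etaT A V eta ≫ nabla A V eta mu psi = (ρ_ V).inv ≫ (V ◁ eta) ≫ psi := by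
  rw [nabla_eq_tmap, etaT_tmap hl]

lemma psi_nabla (hmeas : Measuring A V mu psi) (hr : (A ◁ eta) ≫ mu = (ρ_ A).hom) :
    psi ≫ nabla A V eta mu psi = psi := by
  calc psi ≫ nabla A V eta mu psi
      = (ρ_ (V ⊗ A)).inv ≫ ((V ⊗ A) ◁ eta) ≫ (psi ▷ A) ≫ phi A mu psi := by
        rw [whisker_exchange_assoc]
        simp only [nabla]
        monoidal
    _ = (V ◁ ((ρ_ A).inv ≫ (A ◁ eta) ≫ mu)) ≫ psi := by
        rw [hmeas]
        simp only [MonoidalCategory.whiskerLeft_comp, Category.assoc]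
        monoidal
    _ = psi := by simp [hr]

lemma eta_beta (hl : (eta ▷ A) ≫ mu = (λ_ A).hom) : eta ≫ beta A V mu nu = nu := by
  have : eta ≫ (ρ_ A).inv = etaT A (𝟙_ C) eta := by
    simp only [etaT]
    monoidal
  rw [beta_eq_tmap, reassoc_of% this, etaT_tmap hl]

lemma nu_nabla (hl : (eta ▷ A) ≫ mu = (λ_ A).hom) (hpre3 : Pre3 A V mu psi nu) :
    nu ≫ nabla A V eta mu psi = nu := by
  calc nu ≫ nabla A V eta mu psi
      = (λ_ (𝟙_ C)).inv ≫ (nu ▷ 𝟙_ C) ≫ ((A ⊗ V) ◁ eta) ≫ phi A mu psi := by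
        simp only [nabla]
        monoidal
    _ = eta ≫ (λ_ A).inv ≫ (nu ▷ A) ≫ phi A mu psi := by
        rw [← whisker_exchange_assoc]
        monoidal
    _ = nu := by rw [hpre3, eta_beta hl]

lemma etaT_tensorHom_prodAV (hl : (eta ▷ A) ≫ mu = (λ_ A).hom)
    (hassoc : (mu ▷ A) ≫ mu = (α_ A A A).hom ≫ (A ◁ mu) ≫ mu) {W : C} (f : W ⟶ A ⊗ V) :
    (etaT A V eta ⊗ₘ f) ≫ prodAV A V mu psi sig =
      (V ◁ f) ≫ (α_ V A V).inv ≫ (psi ▷ V) ≫ phi A mu sig := by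
  rw [prodAV_eq_phi hassoc, MonoidalCategory.tensorHom_def', Category.assoc,
    whiskerRight_etaT_phi hl]

lemma whiskerLeft_beta_comp_psi (hassoc : (mu ▷ A) ≫ mu = (α_ A A A).hom ≫ (A ◁ mu) ≫ mu)
    (hmeas : Measuring A V mu psi) :
    (V ◁ beta A V mu nu) ≫ (α_ V A V).inv ≫ (psi ▷ V) ≫ phi A mu sig =
      psi ≫ tmap A mu
        ((ρ_ V).inv ≫ (V ◁ nu) ≫ (α_ V A V).inv ≫ (psi ▷ V) ≫ phi A mu sig) := by
  calc (V ◁ beta A V mu nu) ≫ (α_ V A V).inv ≫ (psi ▷ V) ≫ phi A mu sig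
      = (V ◁ (ρ_ A).inv) ≫ (V ◁ (A ◁ nu)) ≫ (V ◁ (α_ A A V).inv) ≫
          (α_ V (A ⊗ A) V).inv ≫ ((α_ V A A).inv ▷ V) ≫
          (((α_ V A A).hom ≫ (V ◁ mu) ≫ psi) ▷ V) ≫ phi A mu sig := by
        simp only [beta, MonoidalCategory.whiskerLeft_comp, comp_whiskerRight, Category.assoc]
        monoidal
    _ = (V ◁ (ρ_ A).inv) ≫ (V ◁ (A ◁ nu)) ≫ (V ◁ (α_ A A V).inv) ≫
          (α_ V (A ⊗ A) V).inv ≫ ((α_ V A A).inv ▷ V) ≫ ((psi ▷ A) ▷ V) ≫ ((α_ A V A).hom ▷ V) ≫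
          phi A mu ((psi ▷ V) ≫ phi A mu sig) := by
        rw [← hmeas, comp_whiskerRight, Category.assoc, whiskerRight_phi_phi hassoc]
    _ = (ρ_ (V ⊗ A)).inv ≫ ((V ⊗ A) ◁ nu) ≫ (psi ▷ (A ⊗ V)) ≫ (α_ A V (A ⊗ V)).hom ≫
          (A ◁ (α_ V A V).inv) ≫ tmap A mu ((psi ▷ V) ≫ phi A mu sig) := by
        simp only [phi_eq_tmap]
        monoidal
    _ = psi ≫ tmap A mu
          ((ρ_ V).inv ≫ (V ◁ nu) ≫ (α_ V A V).inv ≫ (psi ▷ V) ≫ phi A mu sig) := by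
        rw [whisker_exchange_assoc]
        simp only [← whiskerLeft_tmap]
        monoidal

lemma etaT_tensorHom_beta_prodAV (hl : (eta ▷ A) ≫ mu = (λ_ A).hom)
    (hr : (A ◁ eta) ≫ mu = (ρ_ A).hom)
    (hassoc : (mu ▷ A) ≫ mu = (α_ A A A).hom ≫ (A ◁ mu) ≫ mu)
    (hmeas : Measuring A V mu psi) (hpre1 : Pre1 A V eta mu psi sig nu) :
    (etaT A V eta ⊗ₘ beta A V mu nu) ≫ prodAV A V mu psi sig = psi := by
  rw [etaT_tensorHom_prodAV hl hassoc, whiskerLeft_beta_comp_psi hassoc hmeas, hpre1,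
    etaT_nabla hl, ← nabla_eq_tmap, psi_nabla hmeas hr]

lemma nu_whiskerRight_prodAV (hl : (eta ▷ A) ≫ mu = (λ_ A).hom)
    (hassoc : (mu ▷ A) ≫ mu = (α_ A A A).hom ≫ (A ◁ mu) ≫ mu)
    (hpre2 : Pre2 A V eta mu psi sig nu) (hpre3 : Pre3 A V mu psi nu) :
    (λ_ (A ⊗ V)).inv ≫ (nu ▷ (A ⊗ V)) ≫ prodAV A V mu psi sig = nabla A V eta mu psi := by
  have hnu_sig : (nu ▷ V) ≫ phi A mu sig = (λ_ V).hom ≫ (ρ_ V).inv ≫ (V ◁ eta) ≫ psi := by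
    rw [← etaT_nabla hl, ← hpre2, Iso.hom_inv_id_assoc]
  calc (λ_ (A ⊗ V)).inv ≫ (nu ▷ (A ⊗ V)) ≫ prodAV A V mu psi sig
      = (((λ_ A).inv ≫ (nu ▷ A) ≫ (α_ A V A).hom) ▷ V) ≫
          phi A mu ((psi ▷ V) ≫ phi A mu sig) := by
        rw [prodAV_eq_phi hassoc]
        simp only [phi_eq_tmap, ← whiskerLeft_tmap, comp_whiskerRight, Category.assoc]
        monoidal
    _ = (beta A V mu nu ▷ V) ≫ phi A mu sig := by
        rw [← hpre3]
        simp only [comp_whiskerRight, Category.assoc, whiskerRight_phi_phi hassoc]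
    _ = nabla A V eta mu psi := by
        rw [beta_eq_tmap, comp_whiskerRight, Category.assoc, whiskerRight_tmap_phi hassoc,
          hnu_sig, nabla_eq_tmap]
        simp only [phi_eq_tmap, ← whiskerLeft_tmap]
        monoidal

lemma etaT_tensorHom_etaT_prodAV (hl : (eta ▷ A) ≫ mu = (λ_ A).hom)
    (hassoc : (mu ▷ A) ≫ mu = (α_ A A A).hom ≫ (A ◁ mu) ≫ mu)
    (hcoc : Cocycle A V mu psi sig) (hsig : sig ≫ nabla A V eta mu psi = sig)
    (hpre2 : Pre2 A V eta mu psi sig nu) (hpre3 : Pre3 A V mu psi nu) :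
    (etaT A V eta ⊗ₘ etaT A V eta) ≫ prodAV A V mu psi sig = sig := by
  calc (etaT A V eta ⊗ₘ etaT A V eta) ≫ prodAV A V mu psi sig
      = (((ρ_ V).inv ≫ (V ◁ eta) ≫ psi) ▷ V) ≫ phi A mu sig := by
        rw [etaT_tensorHom_prodAV hl hassoc]
        simp only [etaT, MonoidalCategory.whiskerLeft_comp, comp_whiskerRight, Category.assoc]
        monoidal
    _ = (((λ_ V).inv ≫ (nu ▷ V)) ▷ V) ≫ ((α_ A V V).hom ▷ V) ≫
          phi A mu ((sig ▷ V) ≫ phi A mu sig) := by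
        rw [← etaT_nabla hl, ← hpre2]
        simp only [comp_whiskerRight, Category.assoc, whiskerRight_phi_phi hassoc]
    _ = (λ_ (V ⊗ V)).inv ≫ (nu ▷ (V ⊗ V)) ≫ ((A ⊗ V) ◁ sig) ≫ prodAV A V mu psi sig := by
        rw [hcoc, prodAV_eq_phi hassoc]
        simp only [phi_eq_tmap, ← whiskerLeft_tmap]
        monoidal
    _ = sig ≫ (λ_ (A ⊗ V)).inv ≫ (nu ▷ (A ⊗ V)) ≫ prodAV A V mu psi sig := by
        rw [← whisker_exchange_assoc]
        monoidal
    _ = sig := by rw [nu_whiskerRight_prodAV hl hassoc hpre2 hpre3, hsig]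

end Recovery

/-- in a weak crossed product with preunit, `ψ`, `σ` and `ν` are
recovered from the product. -/
theorem psi_sigma_nu_recovered (A V : C) (eta : 𝟙_ C ⟶ A) (mu : A ⊗ A ⟶ A)
    (hA : IsMon A eta mu) (psi : V ⊗ A ⟶ A ⊗ V) (sig : V ⊗ V ⟶ A ⊗ V)
    (nu : 𝟙_ C ⟶ A ⊗ V) (h : WCPpre A V eta mu psi sig nu) :
    psi = (etaT A V eta ⊗ₘ beta A V mu nu) ≫ prodAV A V mu psi sig ∧
    sig = (etaT A V eta ⊗ₘ etaT A V eta) ≫ prodAV A V mu psi sig ∧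
    nu ≫ nabla A V eta mu psi = nu := by
  obtain ⟨hl, hr, hassoc⟩ := hA
  obtain ⟨⟨hmeas, -, hcoc, hsig⟩, hpre1, hpre2, hpre3⟩ := h
  exact ⟨(etaT_tensorHom_beta_prodAV hl hr hassoc hmeas hpre1).symm,
    (etaT_tensorHom_etaT_prodAV hl hassoc hcoc hsig hpre2 hpre3).symm, nu_nabla hl hpre3⟩

end WeakCrossed
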